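/- arXiv:1110.6390 — 2 statements merged into one kernel-verified Lean document; each statement's English description precedes it below -/
import Mathlib

section
/- Let L be a Moufang loop, T ≤ L a subgroup generated by a set S, and u ∈ L with ((g₁g₂)u)² = 1 for all g₁,g₂ ∈ S ∪ {e}. Then for any finite sequence s_{i₁},…,s_{i_k} of elements of S, one has u(s_{i₁}⋯s_{i_k}) = s_{i₁}⁻¹(u(s_{i₂}⋯s_{i_k})). -/
/-!
From `u² = 1` and `(su)² = 1` one gets `su = (su)⁻¹ = u⁻¹s⁻¹ = us⁻¹`, hence `(su)s = u` by the
right inverse property. The Moufang identity `s(u(sw)) = ((su)s)w` then gives `s(u(sw)) = uw`,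
and cancelling `s` on the left yields `u(sw) = s⁻¹(uw)`.
-/

/-- A Moufang loop: a loop (a quasigroup with two-sided identity) satisfying the
Moufang identities (m1) `z(x(yx)) = ((zx)y)x`, (m2) `x(y(xz)) = ((xy)x)z`,
(m3) `(xy)(zx) = x((yz)x)`. -/
class MoufangLoop (L : Type*) extends Mul L, One L where
  one_mul : ∀ a : L, 1 * a = a
  mul_one : ∀ a : L, a * 1 = a
  left_bij : ∀ a : L, Function.Bijective fun x : L => a * x
  right_bij : ∀ a : L, Function.Bijective fun x : L => x * a
  m1 : ∀ x y z : L, z * (x * (y * x)) = ((z * x) * y) * x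
  m2 : ∀ x y z : L, x * (y * (x * z)) = ((x * y) * x) * z
  m3 : ∀ x y z : L, (x * y) * (z * x) = x * ((y * z) * x)

/-- The subset `T` of the Moufang loop `L`, together with the inversion map `inv`,
forms a subgroup of `L`: it contains the identity, is closed under multiplication
and inversion, multiplication restricted to `T` is associative, and `inv` provides
two-sided inverses in `T`. -/
structure IsSubgroupOfLoop {L : Type*} [MoufangLoop L] (T : Set L) (inv : L → L) : Prop where
  one_mem : (1 : L) ∈ T
  mul_mem : ∀ a ∈ T, ∀ b ∈ T, a * b ∈ T
  inv_mem : ∀ a ∈ T, inv a ∈ T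
  assoc : ∀ a ∈ T, ∀ b ∈ T, ∀ c ∈ T, (a * b) * c = a * (b * c)
  mul_inv : ∀ a ∈ T, a * inv a = 1
  inv_mul : ∀ a ∈ T, inv a * a = 1

/-- `T` is generated (as a group) by the subset `S`: every element of `T` is an
iterated product of elements of `S` and their inverses. -/
def GeneratedBy {L : Type*} [MoufangLoop L] (T : Set L) (inv : L → L) (S : Set L) : Prop :=
  S ⊆ T ∧ ∀ w ∈ T, ∃ l : List L,
    (∀ x ∈ l, x ∈ S ∨ ∃ s ∈ S, x = inv s) ∧ w = l.foldr (· * ·) 1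

namespace MoufangLoop

variable {L : Type*} [MoufangLoop L]

protected theorem mul_left_cancel {a b c : L} (h : a * b = a * c) : b = c :=
  (left_bij a).1 h

protected theorem mul_right_cancel {a b c : L} (h : b * a = c * a) : b = c :=
  (right_bij a).1 h

noncomputable instance : Inv L := ⟨fun a => ((left_bij a).2 1).choose⟩

protected theorem mul_inv_cancel (a : L) : a * a⁻¹ = 1 :=
  ((left_bij a).2 1).choose_spec

protected theorem inv_mul_cancel_left (a z : L) : a⁻¹ * (a * z) = z := by
  apply MoufangLoop.mul_left_cancel (a := a)
  simpa only [MoufangLoop.mul_inv_cancel, MoufangLoop.one_mul] using m2 a a⁻¹ z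

protected theorem inv_mul_cancel (a : L) : a⁻¹ * a = 1 := by
  simpa only [MoufangLoop.mul_one] using MoufangLoop.inv_mul_cancel_left a 1

protected theorem mul_inv_cancel_right (a z : L) : z * a * a⁻¹ = z := by
  apply MoufangLoop.mul_right_cancel (a := a)
  simpa only [MoufangLoop.inv_mul_cancel, MoufangLoop.mul_one] using (m1 a a⁻¹ z).symm

protected theorem eq_inv_of_mul_eq_one_right {a b : L} (h : a * b = 1) : b = a⁻¹ :=
  MoufangLoop.mul_left_cancel (h.trans (MoufangLoop.mul_inv_cancel a).symm)

protected theorem eq_inv_of_mul_eq_one_left {a b : L} (h : b * a = 1) : b = a⁻¹ := by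
  simpa only [h, MoufangLoop.one_mul] using (MoufangLoop.mul_inv_cancel_right a b).symm

protected theorem inv_inv (a : L) : a⁻¹⁻¹ = a :=
  (MoufangLoop.eq_inv_of_mul_eq_one_left (MoufangLoop.mul_inv_cancel a)).symm

protected theorem mul_inv_cancel_left (a z : L) : a * (a⁻¹ * z) = z := by
  simpa only [MoufangLoop.inv_inv] using MoufangLoop.inv_mul_cancel_left a⁻¹ z

protected theorem inv_mul_cancel_right (a z : L) : z * a⁻¹ * a = z := by
  simpa only [MoufangLoop.inv_inv] using MoufangLoop.mul_inv_cancel_right a⁻¹ z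

protected theorem mul_inv_rev (x y : L) : (x * y)⁻¹ = y⁻¹ * x⁻¹ := by
  have hy : y * (x * y)⁻¹ = x⁻¹ := by
    simpa only [MoufangLoop.inv_mul_cancel_left] using
      MoufangLoop.mul_inv_cancel_right (x * y) x⁻¹
  rw [← hy, MoufangLoop.inv_mul_cancel_left]

theorem mul_eq_mul_inv_of_mul_self_eq_one {s u : L} (hu : u * u = 1)
    (hsu : s * u * (s * u) = 1) : s * u = u * s⁻¹ := by
  have hu_inv : u⁻¹ = u := (MoufangLoop.eq_inv_of_mul_eq_one_right hu).symm
  rw [MoufangLoop.eq_inv_of_mul_eq_one_right hsu, MoufangLoop.mul_inv_rev, hu_inv]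

theorem mul_mul_eq_inv_mul_mul_of_mul_self_eq_one {s u : L} (hu : u * u = 1)
    (hsu : s * u * (s * u) = 1) (w : L) : u * (s * w) = s⁻¹ * (u * w) := by
  have hsus : s * u * s = u := by
    rw [mul_eq_mul_inv_of_mul_self_eq_one hu hsu, MoufangLoop.inv_mul_cancel_right]
  apply MoufangLoop.mul_left_cancel (a := s)
  rw [m2, hsus, MoufangLoop.mul_inv_cancel_left]

end MoufangLoop

/-- Lemma 2.4: if `L` is a Moufang loop, `T ≤ L` a subgroup generated by `S`, and
`u ∈ L` satisfies `((g₁g₂)u)² = 1` for all `g₁, g₂ ∈ S ∪ {e}`, then for any finite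
sequence `s_{i₁}, …, s_{i_k}` of elements of `S` one has
`u(s_{i₁} ⋯ s_{i_k}) = s_{i₁}⁻¹ (u (s_{i₂} ⋯ s_{i_k}))`. -/
theorem weak_c2 {L : Type*} [MoufangLoop L]
    (T : Set L) (inv : L → L) (S : Set L) (u : L)
    (hT : IsSubgroupOfLoop T inv) (hgen : GeneratedBy T inv S)
    (hu : ∀ g₁ ∈ insert (1 : L) S, ∀ g₂ ∈ insert (1 : L) S,
      ((g₁ * g₂) * u) * ((g₁ * g₂) * u) = 1) :
    ∀ s ∈ S, ∀ l : List L, (∀ x ∈ l, x ∈ S) →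
      u * ((s :: l).foldr (· * ·) 1) = inv s * (u * (l.foldr (· * ·) 1)) := by
  intro s hs l _
  have h1 : (1 : L) ∈ insert (1 : L) S := Set.mem_insert 1 S
  have hs1 : s ∈ insert (1 : L) S := Set.mem_insert_of_mem 1 hs
  have huu : u * u = 1 := by simpa only [MoufangLoop.one_mul] using hu 1 h1 1 h1
  have hsu : s * u * (s * u) = 1 := by simpa only [MoufangLoop.mul_one] using hu s hs1 1 h1
  rw [MoufangLoop.eq_inv_of_mul_eq_one_right (hT.mul_inv s (hgen.1 hs))]
  exact MoufangLoop.mul_mul_eq_inv_mul_mul_of_mul_self_eq_one huu hsu _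
end

section
/- Let L = M(G,2) where G is a group not isomorphic to M(H,2) for any group H. Then Aut(L) ≅ G ⋊ Aut(G), where G acts by left translation on the coset Gu (g·(g₁u) = (gg₁)u, fixing G pointwise) and Aut(G) extends naturally to L by ψ(gu) = ψ(g)u. -/
/-- The Chein loop `M(G,2) = G ⊎ Gu`, realized on `G ⊕ G` where `Sum.inl g = g`
and `Sum.inr g = g·u`, with multiplication extending that of `G` and satisfying
(c1) `g₁(g₂u) = (g₂g₁)u`, (c2) `(g₁u)g₂ = (g₁g₂⁻¹)u`, (c3) `(g₁u)(g₂u) = g₂⁻¹g₁`. -/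
instance cheinMul (G : Type*) [Group G] : Mul (G ⊕ G) :=
  ⟨fun x y =>
    match x, y with
    | .inl a, .inl b => .inl (a * b)
    | .inl a, .inr b => .inr (b * a)
    | .inr a, .inl b => .inr (a * b⁻¹)
    | .inr a, .inr b => .inl (b⁻¹ * a)⟩


instance cheinOne (G : Type*) [Group G] : One (G ⊕ G) := ⟨Sum.inl 1⟩

/-!
An automorphism `φ` of `M(G,2)` that sent some `g` to an element of `Gu` would embed `G` into
`M(G,2)` with image meeting `Gu`. Such an image is always a copy of `M(H,2) = H ⊎ (aH)u`, where
`H` is the subgroup of `G` it meets, so `G ≅ M(H,2)`, which is excluded. Applied to `φ` and `φ⁻¹`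
this shows that `φ` preserves `G` and `Gu`. Then `φ|_G = ψ ∈ Aut(G)`, and writing `φ(u) = gu`,
`φ(xu) = φ(x)φ(u) = (g ψ(x))u`, so `φ` is the image of `(g, ψ)`.
-/

namespace MulHom

variable {M N P : Type*} [Mul M] [Mul N] [Mul P]

lemma srangeRestrict_injective {f : M →ₙ* P} (hf : Function.Injective f) :
    Function.Injective f.srangeRestrict :=
  fun _ _ hxy => hf (congrArg Subtype.val hxy)

lemma nonempty_mulEquiv_of_srange_eq {f : M →ₙ* P} {g : N →ₙ* P} (hf : Function.Injective f)
    (hg : Function.Injective g) (h : f.srange = g.srange) : Nonempty (M ≃* N) :=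
  ⟨(MulEquiv.ofBijective _ ⟨srangeRestrict_injective hf, srangeRestrict_surjective f⟩).trans <|
    (MulEquiv.subsemigroupCongr h).trans
      (MulEquiv.ofBijective _ ⟨srangeRestrict_injective hg, srangeRestrict_surjective g⟩).symm⟩

end MulHom

namespace CheinLoop

open Function Sum

section

variable {G K : Type*} [Group G] [Group K]

@[simp] lemma inl_mul_inl (a b : G) : (inl a * inl b : G ⊕ G) = inl (a * b) := rfl
@[simp] lemma inl_mul_inr (a b : G) : (inl a * inr b : G ⊕ G) = inr (b * a) := rfl
@[simp] lemma inr_mul_inl (a b : G) : (inr a * inl b : G ⊕ G) = inr (a * b⁻¹) := rfl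
@[simp] lemma inr_mul_inr (a b : G) : (inr a * inr b : G ⊕ G) = inl (b⁻¹ * a) := rfl
@[simp] lemma one_def : (1 : G ⊕ G) = inl 1 := rfl

lemma eq_one_of_mul_self {x : G ⊕ G} (hx : x * x = x) : x = 1 := by
  rcases x with a | a
  · simpa using hx
  · simp at hx

lemma map_one_eq_one (f : K →ₙ* G ⊕ G) : f 1 = 1 :=
  eq_one_of_mul_self (by rw [← map_mul, mul_one])

def inlHom : G →ₙ* G ⊕ G where
  toFun := inl
  map_mul' _ _ := rfl

def map (ι : K →* G) (a : G) : K ⊕ K →ₙ* G ⊕ G where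
  toFun := Sum.map ι (a * ι ·)
  map_mul' := by rintro (x | x) (y | y) <;> simp [mul_assoc]

@[simp] lemma map_apply_inl (ι : K →* G) (a : G) (x : K) : map ι a (inl x) = inl (ι x) := rfl
@[simp] lemma map_apply_inr (ι : K →* G) (a : G) (x : K) : map ι a (inr x) = inr (a * ι x) := rfl

lemma map_injective {ι : K →* G} (hι : Injective ι) (a : G) : Injective (map ι a) :=
  Sum.map_injective.2 ⟨hι, (mul_right_injective a).comp hι⟩

def inlSubgroup (f : K →ₙ* G ⊕ G) : Subgroup G where
  carrier := {c | inl c ∈ Set.range f}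
  one_mem' := ⟨1, map_one_eq_one f⟩
  mul_mem' := by
    rintro c d ⟨x, hx⟩ ⟨y, hy⟩
    exact ⟨x * y, by rw [map_mul, hx, hy, inl_mul_inl]⟩
  inv_mem' := by
    rintro c ⟨x, hx⟩
    refine ⟨x⁻¹, ?_⟩
    have hprod : f x * f x⁻¹ = inl 1 := by rw [← map_mul, mul_inv_cancel, map_one_eq_one, one_def]
    rw [hx] at hprod
    rcases hinv : f x⁻¹ with d | d <;> rw [hinv] at hprod
    · exact congrArg inl (eq_inv_of_mul_eq_one_right (inl_injective hprod))
    · simp at hprod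

/-- Right multiplication by `b` swaps the parts of the image of `f` in `G` and in `Gu`. -/
lemma srange_eq_srange_map (f : K →ₙ* G ⊕ G) {a : G} {b : K} (hb : f b = inr a) :
    f.srange = (map (inlSubgroup f).subtype a).srange := by
  ext z
  simp only [MulHom.mem_srange]
  constructor
  · rintro ⟨x, rfl⟩
    rcases hx : f x with c | y
    · exact ⟨inl ⟨c, x, hx⟩, rfl⟩
    · have hmem : a⁻¹ * y ∈ inlSubgroup f := ⟨x * b, by rw [map_mul, hx, hb, inr_mul_inr]⟩
      exact ⟨inr ⟨_, hmem⟩, by simp⟩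
  · rintro ⟨(⟨c, x, hx⟩ | ⟨c, x, hx⟩), rfl⟩
    · exact ⟨x, hx⟩
    · exact ⟨x * b, by rw [map_mul, hx, hb]; rfl⟩

lemma nonempty_mulEquiv_of_apply_eq_inr {f : K →ₙ* G ⊕ G} (hf : Injective f) {a : G} {b : K}
    (hb : f b = inr a) : Nonempty (K ≃* (inlSubgroup f ⊕ inlSubgroup f)) :=
  MulHom.nonempty_mulEquiv_of_srange_eq hf (map_injective Subtype.val_injective a)
    (srange_eq_srange_map f hb)

def mulAutOf (g : G) (ψ : MulAut G) : MulAut (G ⊕ G) where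
  toEquiv := Equiv.sumCongr ψ.toEquiv (ψ.toEquiv.trans (Equiv.mulLeft g))
  map_mul' := map_mul (map ψ.toMonoidHom g)

@[simp] lemma mulAutOf_apply_inl (g : G) (ψ : MulAut G) (x : G) :
    mulAutOf g ψ (inl x) = inl (ψ x) := rfl

@[simp] lemma mulAutOf_apply_inr (g : G) (ψ : MulAut G) (x : G) :
    mulAutOf g ψ (inr x) = inr (g * ψ x) := rfl

def toMulAut : G ⋊[MonoidHom.id (MulAut G)] MulAut G →* MulAut (G ⊕ G) where
  toFun p := mulAutOf p.left p.right
  map_one' := by ext (x | x) <;> simp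
  map_mul' p q := by ext (x | x) <;> simp [MulAut.mul_apply, mul_assoc]

lemma toMulAut_injective : Injective (toMulAut (G := G)) := by
  intro p q hpq
  have happly (z : G ⊕ G) : mulAutOf p.left p.right z = mulAutOf q.left q.right z :=
    DFunLike.congr_fun hpq z
  refine SemidirectProduct.ext ?_ (MulEquiv.ext fun x => inl_injective (happly (inl x)))
  simpa using happly (inr 1)

lemma exists_apply_inl_eq_inl (h : ∀ H : Subgroup G, IsEmpty (G ≃* (H ⊕ H)))
    (φ : MulAut (G ⊕ G)) (x : G) : ∃ y, φ (inl x) = inl y := by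
  rcases hx : φ (inl x) with y | a
  · exact ⟨y, rfl⟩
  · obtain ⟨e⟩ := nonempty_mulEquiv_of_apply_eq_inr
      (f := (φ : G ⊕ G →ₙ* G ⊕ G).comp inlHom) (φ.injective.comp inl_injective) hx
    exact (h _).elim e

lemma exists_apply_inr_eq_inr (h : ∀ H : Subgroup G, IsEmpty (G ≃* (H ⊕ H)))
    (φ : MulAut (G ⊕ G)) (x : G) : ∃ y, φ (inr x) = inr y := by
  rcases hx : φ (inr x) with y | y
  · obtain ⟨z, hz⟩ := exists_apply_inl_eq_inl h φ.symm y
    rw [← hx, φ.symm_apply_apply] at hz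
    exact absurd hz inr_ne_inl
  · exact ⟨y, rfl⟩

noncomputable def restrictInl (φ : MulAut (G ⊕ G)) (hφ : ∀ x, ∃ y, φ (inl x) = inl y) :
    G →ₙ* G where
  toFun x := (hφ x).choose
  map_mul' x y := inl_injective (β := G) <| calc
    inl (hφ (x * y)).choose = φ (inl x * inl y) := (hφ (x * y)).choose_spec.symm
    _ = inl (hφ x).choose * inl (hφ y).choose :=
      (map_mul φ _ _).trans (congrArg₂ (· * ·) (hφ x).choose_spec (hφ y).choose_spec)

lemma inl_restrictInl (φ : MulAut (G ⊕ G)) (hφ : ∀ x, ∃ y, φ (inl x) = inl y) (x : G) :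
    inl (restrictInl φ hφ x) = φ (inl x) :=
  (hφ x).choose_spec.symm

lemma toMulAut_surjective (h : ∀ H : Subgroup G, IsEmpty (G ≃* (H ⊕ H))) :
    Surjective (toMulAut (G := G)) := by
  intro φ
  have hl := exists_apply_inl_eq_inl h φ
  set ψ := restrictInl φ hl
  have hψ_inj : Injective ψ := fun x y hxy =>
    inl_injective (φ.injective (by rw [← inl_restrictInl φ hl, ← inl_restrictInl φ hl, hxy]))
  have hψ_surj : Surjective ψ := by
    intro y
    obtain ⟨x, hx⟩ := exists_apply_inl_eq_inl h φ.symm y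
    refine ⟨x, inl_injective (β := G) ?_⟩
    rw [inl_restrictInl, ← hx, φ.apply_symm_apply]
  obtain ⟨g, hg⟩ := exists_apply_inr_eq_inr h φ 1
  refine ⟨⟨g, MulEquiv.ofBijective ψ ⟨hψ_inj, hψ_surj⟩⟩, MulEquiv.ext ?_⟩
  rintro (x | x)
  · exact inl_restrictInl φ _ x
  · calc inr (g * ψ x) = inl (ψ x) * inr g := rfl
      _ = φ (inl x * inr 1) := by rw [map_mul, inl_restrictInl, hg]
      _ = φ (inr x) := by simp

end

end CheinLoop

open CheinLoop in
theorem aut_chein_eq_semidirect_general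
    (G : Type) [Group G]
    (h : ∀ (H : Type) [Group H], IsEmpty (G ≃* (H ⊕ H))) :
    ∃ Φ : SemidirectProduct G (MulAut G) (MonoidHom.id (MulAut G)) ≃* MulAut (G ⊕ G),
      (∀ g g₁ : G,
        (Φ ⟨g, 1⟩) (Sum.inl g₁) = Sum.inl g₁ ∧
        (Φ ⟨g, 1⟩) (Sum.inr g₁) = Sum.inr (g * g₁)) ∧
      (∀ (ψ : MulAut G) (g₁ : G),
        (Φ ⟨1, ψ⟩) (Sum.inl g₁) = Sum.inl (ψ g₁) ∧
        (Φ ⟨1, ψ⟩) (Sum.inr g₁) = Sum.inr (ψ g₁)) :=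
  ⟨MulEquiv.ofBijective toMulAut ⟨toMulAut_injective, toMulAut_surjective fun H => h H⟩,
    fun _ _ => ⟨rfl, rfl⟩, fun _ _ => ⟨rfl, congrArg Sum.inr (one_mul _)⟩⟩

/-- Theorem 3.4: let `L = M(G,2)` (realized on `G ⊕ G`) where `G` is not isomorphic
to `M(H,2)` for any group `H`. Then `Aut(L) ≅ G ⋊ Aut(G)`, where `G` acts by left
translation on the coset `Gu` (`g·(g₁u) = (gg₁)u`, fixing `G` pointwise) and
`Aut(G)` extends naturally to `L` by `ψ(gu) = ψ(g)u`. -/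
theorem aut_chein_eq_semidirect
    (G : Type) [Group G] [Finite G]
    (h : ∀ (H : Type) [Group H], IsEmpty (G ≃* (H ⊕ H))) :
    ∃ Φ : SemidirectProduct G (MulAut G) (MonoidHom.id (MulAut G)) ≃* MulAut (G ⊕ G),
      (∀ g g₁ : G,
        (Φ ⟨g, 1⟩) (Sum.inl g₁) = Sum.inl g₁ ∧
        (Φ ⟨g, 1⟩) (Sum.inr g₁) = Sum.inr (g * g₁)) ∧
      (∀ (ψ : MulAut G) (g₁ : G),
        (Φ ⟨1, ψ⟩) (Sum.inl g₁) = Sum.inl (ψ g₁) ∧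
        (Φ ⟨1, ψ⟩) (Sum.inr g₁) = Sum.inr (ψ g₁)) :=
  aut_chein_eq_semidirect_general G h
end
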